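/- arXiv:1211.1123 — 4 statements merged into one kernel-verified Lean document; each statement's English description precedes it below -/
import Mathlib

section
/- Lemma 2.2: Suppose assumption (H2) holds. Then for every x ∈ S the symmetric matrix Q(x) := B(x)H(x)B(x)ᵀ − diag(g(x)) is positive definite. -/
open Matrix Set Filter

noncomputable section

/-- The gradient of `f : ℝⁿ → ℝ` at `x`, as the vector of partial derivatives. -/
def grad {n : ℕ} (f : (Fin n → ℝ) → ℝ) (x : Fin n → ℝ) : Fin n → ℝ :=
  fun j => fderiv ℝ f x (Pi.single j 1)

/-- The feasible set `S`. -/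
def feas {n m k : ℕ} (h : Fin m → (Fin n → ℝ) → ℝ) (g : Fin k → (Fin n → ℝ) → ℝ) :
    Set (Fin n → ℝ) :=
  {x | (∀ i, h i x = 0) ∧ (∀ j, g j x ≤ 0)}

/-- Jacobian of the equality constraints (rows `∇h_i(x)`). -/
def matA {n m : ℕ} (h : Fin m → (Fin n → ℝ) → ℝ) (x : Fin n → ℝ) :
    Matrix (Fin m) (Fin n) ℝ :=
  Matrix.of fun i => grad (h i) x

/-- Jacobian of the inequality constraints (rows `∇g_j(x)`). -/
def matB {n k : ℕ} (g : Fin k → (Fin n → ℝ) → ℝ) (x : Fin n → ℝ) :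
    Matrix (Fin k) (Fin n) ℝ :=
  Matrix.of fun j => grad (g j) x

/-- `H(x) = I − Aᵀ(AAᵀ)⁻¹A`. -/
def matH {n m : ℕ} (h : Fin m → (Fin n → ℝ) → ℝ) (x : Fin n → ℝ) :
    Matrix (Fin n) (Fin n) ℝ :=
  1 - (matA h x)ᵀ * (matA h x * (matA h x)ᵀ)⁻¹ * matA h x

/-- `Q(x) = B(x)H(x)B(x)ᵀ − diag(g(x))`. -/
def matQ {n m k : ℕ} (h : Fin m → (Fin n → ℝ) → ℝ) (g : Fin k → (Fin n → ℝ) → ℝ)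
    (x : Fin n → ℝ) : Matrix (Fin k) (Fin k) ℝ :=
  matB g x * matH h x * (matB g x)ᵀ - Matrix.diagonal (fun j => g j x)

/-- Assumption (H1). -/
def hypH1 {n m k : ℕ} (θ : (Fin n → ℝ) → ℝ) (h : Fin m → (Fin n → ℝ) → ℝ)
    (g : Fin k → (Fin n → ℝ) → ℝ) : Prop :=
  (feas h g).Nonempty ∧ ∀ x₀ ∈ feas h g, IsCompact {x ∈ feas h g | θ x ≤ θ x₀}

/-- Assumption (H2). -/
def hypH2 {n m k : ℕ} (h : Fin m → (Fin n → ℝ) → ℝ) (g : Fin k → (Fin n → ℝ) → ℝ) : Prop :=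
  ∀ x ∈ feas h g,
    LinearIndependent ℝ
      (Sum.elim (fun i : Fin m => grad (h i) x)
        (fun j : {j : Fin k // g j x = 0} => grad (g (j : Fin k)) x))

/-- `P(x) = Q(x)⁻¹ B(x) H(x)`. -/
def matP {n m k : ℕ} (h : Fin m → (Fin n → ℝ) → ℝ) (g : Fin k → (Fin n → ℝ) → ℝ)
    (x : Fin n → ℝ) : Matrix (Fin k) (Fin n) ℝ :=
  (matQ h g x)⁻¹ * matB g x * matH h x

/-- `v(x) = P(x)(∇θ(x))ᵀ`. -/
def vecv {n m k : ℕ} (θ : (Fin n → ℝ) → ℝ) (h : Fin m → (Fin n → ℝ) → ℝ)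
    (g : Fin k → (Fin n → ℝ) → ℝ) (x : Fin n → ℝ) : Fin k → ℝ :=
  (matP h g x).mulVec (grad θ x)

/-- componentwise positive part. -/
def pPart {k : ℕ} (w : Fin k → ℝ) : Fin k → ℝ := fun j => max 0 (w j)

/-- `R₃(x)`. -/
def matR3 {n k : ℕ} (b c : Fin k → (Fin n → ℝ) → ℝ) (p : Fin k → ℕ) (x : Fin n → ℝ)
    (v : Fin k → ℝ) : Matrix (Fin k) (Fin k) ℝ :=
  Matrix.diagonal (fun j => b j x + c j x * (max 0 (v j)) ^ (2 * p j))

/-- The vector field `F(x)` of (2.4), (2.5). -/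
def vecF {n m k : ℕ} (θ : (Fin n → ℝ) → ℝ) (h : Fin m → (Fin n → ℝ) → ℝ)
    (g : Fin k → (Fin n → ℝ) → ℝ)
    (R1 : (Fin n → ℝ) → Matrix (Fin n) (Fin n) ℝ)
    (R2 : (Fin n → ℝ) → Matrix (Fin k) (Fin k) ℝ)
    (a b c : Fin k → (Fin n → ℝ) → ℝ) (p : Fin k → ℕ) (x : Fin n → ℝ) : Fin n → ℝ :=
  -(((matH h x - (matP h g x)ᵀ * matQ h g x * matP h g x) * R1 x *
      (matH h x - (matP h g x)ᵀ * matQ h g x * matP h g x)).mulVec (grad θ x))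
  - ((matP h g x)ᵀ * Matrix.diagonal (fun j => g j x) *
      (R2 x * Matrix.diagonal (fun j => g j x) - Matrix.diagonal (fun j => a j x))).mulVec
        (vecv θ h g x)
  - ((matP h g x)ᵀ * matR3 b c p x (vecv θ h g x)).mulVec (pPart (vecv θ h g x))

/-- The set `Φ` of KKT points. -/
def KKTset {n m k : ℕ} (θ : (Fin n → ℝ) → ℝ) (h : Fin m → (Fin n → ℝ) → ℝ)
    (g : Fin k → (Fin n → ℝ) → ℝ) : Set (Fin n → ℝ) :=
  {x | x ∈ feas h g ∧ ∃ (lam : Fin m → ℝ) (mu : Fin k → ℝ),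
    (∀ j, 0 ≤ mu j) ∧
    grad θ x + (∑ i, lam i • grad (h i) x) + (∑ j, mu j • grad (g j) x) = 0 ∧
    (∑ j, mu j * g j x) = 0}

/-!
Let `P = 1 - Aᵀ(AAᵀ)⁻¹A` be the orthogonal projector onto `ker A`. Since `P` is symmetric and
idempotent, `Q = BPBᵀ - diag(g)` is the sum of the positive semidefinite matrices `(PBᵀ)ᵀ(PBᵀ)`
and `diag(-g)`, so it suffices that their kernels meet only in `0`. If `y` lies in both, then
`y` vanishes on the inactive constraints, and `P(Bᵀy) = 0` puts `Bᵀy` in the row space of `A`,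
say `Bᵀy = Aᵀc`. This is a linear relation between the gradients of the equality constraints
and of the active inequality constraints, which (H2) forces to be trivial, so `y = 0`.
-/

namespace Matrix

variable {m n k : Type*}

open scoped ComplexOrder in
theorem PosSemidef.posDef_add {𝕜 : Type*} [RCLike 𝕜] [Fintype n] {M N : Matrix n n 𝕜}
    (hM : M.PosSemidef) (hN : N.PosSemidef) (hker : ∀ x, M *ᵥ x = 0 → N *ᵥ x = 0 → x = 0) :
    (M + N).PosDef := by
  refine .of_dotProduct_mulVec_pos (hM.isHermitian.add hN.isHermitian) fun x hx => ?_
  have hMx := hM.dotProduct_mulVec_nonneg x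
  have hNx := hN.dotProduct_mulVec_nonneg x
  rw [add_mulVec, dotProduct_add]
  refine (add_nonneg hMx hNx).lt_of_ne' fun h0 => hx ?_
  obtain ⟨hMx0, hNx0⟩ := (add_eq_zero_iff_of_nonneg hMx hNx).1 h0
  exact hker x ((hM.dotProduct_mulVec_zero_iff x).1 hMx0) ((hN.dotProduct_mulVec_zero_iff x).1 hNx0)

theorem eq_zero_of_vecMul_eq_of_linearIndependent {R : Type*} [CommRing R] [Fintype m]
    [Fintype k] {A : Matrix m n R} {B : Matrix k n R} {p : k → Prop}
    (hli : LinearIndependent R (Sum.elim A.row fun j : {j // p j} => B.row j))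
    {c : m → R} {y : k → R} (hy : ∀ j, ¬ p j → y j = 0) (hc : c ᵥ* A = y ᵥ* B) : y = 0 := by
  classical
  have hyB : ∑ j : {j // p j}, y j • B j = y ᵥ* B := by
    rw [vecMul_eq_sum, ← Fintype.sum_subtype_add_sum_subtype p,
      Fintype.sum_eq_zero (fun j : {j // ¬p j} => y j • B j) fun j => by simp [hy j j.2],
      add_zero]
  have hcoeff := Fintype.linearIndependent_iff.1 hli (Sum.elim c fun j => -y j) (by
    simp only [Fintype.sum_sum_type, Sum.elim_inl, Sum.elim_inr, neg_smul, row_apply',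
      Finset.sum_neg_distrib, ← vecMul_eq_sum, hyB, hc, add_neg_cancel])
  funext j
  by_cases hpj : p j
  · simpa using hcoeff (Sum.inr ⟨j, hpj⟩)
  · exact hy j hpj

theorem isUnit_det_mul_transpose_of_linearIndependent [Fintype m] [Fintype n] [DecidableEq m]
    {A : Matrix m n ℝ} (hA : LinearIndependent ℝ A.row) : IsUnit (A * Aᵀ).det := by
  rw [← isUnit_iff_isUnit_det, ← conjTranspose_eq_transpose_of_trivial]
  exact (PosDef.mul_conjTranspose_self A (vecMul_injective_iff.2 hA)).isUnit

section orthProjKer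

variable [Fintype m] [Fintype n] [DecidableEq m] [DecidableEq n] (A : Matrix m n ℝ)

def orthProjKer : Matrix n n ℝ := 1 - Aᵀ * (A * Aᵀ)⁻¹ * A

theorem transpose_orthProjKer : (orthProjKer A)ᵀ = orthProjKer A := by
  rw [orthProjKer, transpose_sub, transpose_one, transpose_mul, transpose_mul, transpose_transpose,
    transpose_nonsing_inv, transpose_mul, transpose_transpose, Matrix.mul_assoc]

variable {A}

theorem orthProjKer_mul_transpose (hA : IsUnit (A * Aᵀ).det) : orthProjKer A * Aᵀ = 0 := by
  rw [orthProjKer, Matrix.sub_mul, Matrix.one_mul, Matrix.mul_assoc, Matrix.mul_assoc,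
    nonsing_inv_mul _ hA, Matrix.mul_one, sub_self]

theorem orthProjKer_mul_self (hA : IsUnit (A * Aᵀ).det) :
    orthProjKer A * orthProjKer A = orthProjKer A := by
  conv_lhs => enter [2]; rw [orthProjKer]
  rw [Matrix.mul_sub, Matrix.mul_one, ← Matrix.mul_assoc, ← Matrix.mul_assoc,
    orthProjKer_mul_transpose hA, Matrix.zero_mul, Matrix.zero_mul, sub_zero]

theorem exists_vecMul_eq_of_orthProjKer_mulVec_eq_zero {v : n → ℝ}
    (hv : orthProjKer A *ᵥ v = 0) : ∃ c, c ᵥ* A = v := by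
  refine ⟨((A * Aᵀ)⁻¹ * A) *ᵥ v, ?_⟩
  rw [orthProjKer, sub_mulVec, one_mulVec, sub_eq_zero] at hv
  rw [← mulVec_transpose, mulVec_mulVec, ← Matrix.mul_assoc, ← hv]

theorem mul_orthProjKer_mul_transpose_eq (hA : IsUnit (A * Aᵀ).det) (B : Matrix k n ℝ) :
    B * orthProjKer A * Bᵀ = (orthProjKer A * Bᵀ)ᴴ * (orthProjKer A * Bᵀ) := by
  rw [conjTranspose_eq_transpose_of_trivial, transpose_mul, transpose_transpose,
    transpose_orthProjKer, ← Matrix.mul_assoc, Matrix.mul_assoc B (orthProjKer A) (orthProjKer A),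
    orthProjKer_mul_self hA, Matrix.mul_assoc]

end orthProjKer

theorem posDef_mul_orthProjKer_mul_transpose_sub_diagonal [Fintype m] [Fintype n] [Fintype k]
    [DecidableEq m] [DecidableEq n] [DecidableEq k] {A : Matrix m n ℝ} {B : Matrix k n ℝ}
    {d : k → ℝ} (hd : d ≤ 0)
    (hli : LinearIndependent ℝ (Sum.elim A.row fun j : {j // d j = 0} => B.row j)) :
    (B * orthProjKer A * Bᵀ - diagonal d).PosDef := by
  have hA := isUnit_det_mul_transpose_of_linearIndependent (A := A)
    (hli.comp Sum.inl Sum.inl_injective)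
  rw [mul_orthProjKer_mul_transpose_eq hA, sub_eq_add_neg, diagonal_neg]
  refine (posSemidef_conjTranspose_mul_self _).posDef_add (.diagonal fun j => neg_nonneg.2 (hd j))
    fun y hPBy hdy => ?_
  rw [conjTranspose_mul_self_mulVec_eq_zero, ← mulVec_mulVec, mulVec_transpose] at hPBy
  obtain ⟨c, hc⟩ := exists_vecMul_eq_of_orthProjKer_mulVec_eq_zero hPBy
  refine eq_zero_of_vecMul_eq_of_linearIndependent hli (fun j hj => ?_) hc
  simpa [mulVec_diagonal, hj] using congrFun hdy j

end Matrix

theorem stmt_4_general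
    {n m k : ℕ}
    (h : Fin m → (Fin n → ℝ) → ℝ) (g : Fin k → (Fin n → ℝ) → ℝ)
    (hH2 : hypH2 h g) :
    ∀ x ∈ feas h g, (matQ h g x).PosDef :=
  fun x hx => posDef_mul_orthProjKer_mul_transpose_sub_diagonal hx.2 (hH2 x hx)

/-- Lemma 2.2: under assumption (H2) the matrix `Q(x) = B(x)H(x)B(x)ᵀ − diag(g(x))`
is positive definite for every `x ∈ S`. -/
theorem stmt_4
    {n m k : ℕ} (hmn : m < n)
    (θ : (Fin n → ℝ) → ℝ) (h : Fin m → (Fin n → ℝ) → ℝ) (g : Fin k → (Fin n → ℝ) → ℝ)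
    (hθ : ContDiff ℝ 2 θ) (hhC : ∀ i, ContDiff ℝ 2 (h i)) (hgC : ∀ j, ContDiff ℝ 2 (g j))
    (hH2 : hypH2 h g) :
    ∀ x ∈ feas h g, (matQ h g x).PosDef :=
  stmt_4_general h g hH2

end
end

section
/- Theorem 2.3(a): Under assumptions (H1) and (H2), the vector field F satisfies A(x)F(x) = 0 for every x ∈ S. -/
open Matrix Set Filter

noncomputable section

/-! Every term of `F` starts on the left with `H` or with `Pᵀ = H Bᵀ (Q⁻¹)ᵀ`, and
`H = I − Aᵀ(AAᵀ)⁻¹A` satisfies `AH = 0` and `HAᵀ = 0` as soon as `AAᵀ` is invertible,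
which (H2) guarantees through the linear independence of the rows of `A`. -/

namespace Matrix

variable {m n R : Type*} [Fintype m] [Fintype n] [DecidableEq m]

theorem isUnit_mul_transpose_of_linearIndependent_row [Field R] [LinearOrder R]
    [IsStrictOrderedRing R] {A : Matrix m n R} (hA : LinearIndependent R A.row) :
    IsUnit (A * Aᵀ) := by
  rw [← linearIndependent_rows_iff_isUnit, linearIndependent_iff_card_eq_finrank_span,
    Set.finrank, ← rank_eq_finrank_span_row, rank_self_mul_transpose, hA.rank_matrix]

variable [DecidableEq n] [CommRing R] {A : Matrix m n R}

theorem mul_one_sub_transpose_mul_inv_mul (hA : IsUnit (A * Aᵀ)) :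
    A * (1 - Aᵀ * (A * Aᵀ)⁻¹ * A) = 0 := by
  rw [Matrix.mul_sub, Matrix.mul_one, ← Matrix.mul_assoc, ← Matrix.mul_assoc,
    mul_nonsing_inv _ ((isUnit_iff_isUnit_det _).mp hA), Matrix.one_mul, sub_self]

theorem one_sub_transpose_mul_inv_mul_mul_transpose (hA : IsUnit (A * Aᵀ)) :
    (1 - Aᵀ * (A * Aᵀ)⁻¹ * A) * Aᵀ = 0 := by
  rw [Matrix.sub_mul, Matrix.one_mul, Matrix.mul_assoc, Matrix.mul_assoc,
    nonsing_inv_mul _ ((isUnit_iff_isUnit_det _).mp hA), Matrix.mul_one, sub_self]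

end Matrix

section Projection

variable {n m k : ℕ} {h : Fin m → (Fin n → ℝ) → ℝ} {x : Fin n → ℝ}

theorem matA_mul_matH (hA : LinearIndependent ℝ fun i => grad (h i) x) :
    matA h x * matH h x = 0 :=
  mul_one_sub_transpose_mul_inv_mul (isUnit_mul_transpose_of_linearIndependent_row hA)

theorem matA_mul_transpose_matP (g : Fin k → (Fin n → ℝ) → ℝ)
    (hA : LinearIndependent ℝ fun i => grad (h i) x) :
    matA h x * (matP h g x)ᵀ = 0 := by
  have hAAt : IsUnit (matA h x * (matA h x)ᵀ) :=
    isUnit_mul_transpose_of_linearIndependent_row hA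
  rw [← transpose_transpose (matA h x), ← transpose_mul, matP, Matrix.mul_assoc, matH,
    one_sub_transpose_mul_inv_mul_mul_transpose hAAt, Matrix.mul_zero, transpose_zero]

end Projection

theorem stmt_5_general
    {n m k : ℕ}
    (θ : (Fin n → ℝ) → ℝ) (h : Fin m → (Fin n → ℝ) → ℝ) (g : Fin k → (Fin n → ℝ) → ℝ)
    (hH2 : hypH2 h g)
    (R1 : (Fin n → ℝ) → Matrix (Fin n) (Fin n) ℝ)
    (R2 : (Fin n → ℝ) → Matrix (Fin k) (Fin k) ℝ)
    (a b c : Fin k → (Fin n → ℝ) → ℝ) (p : Fin k → ℕ) :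
    ∀ x ∈ feas h g, (matA h x).mulVec (vecF θ h g R1 R2 a b c p x) = 0 := by
  intro x hx
  have hA : LinearIndependent ℝ fun i => grad (h i) x :=
    (hH2 x hx).comp Sum.inl Sum.inl_injective
  simp only [vecF, mulVec_sub, mulVec_neg, mulVec_mulVec, ← Matrix.mul_assoc, Matrix.mul_sub,
    matA_mul_matH hA, matA_mul_transpose_matP g hA, Matrix.zero_mul, sub_self, zero_mulVec,
    neg_zero]

/-- Theorem 2.3(a): `A(x)F(x) = 0` for every `x ∈ S`. -/
theorem stmt_5
    {n m k : ℕ} (hmn : m < n)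
    (θ : (Fin n → ℝ) → ℝ) (h : Fin m → (Fin n → ℝ) → ℝ) (g : Fin k → (Fin n → ℝ) → ℝ)
    (hθ : ContDiff ℝ 2 θ) (hhC : ∀ i, ContDiff ℝ 2 (h i)) (hgC : ∀ j, ContDiff ℝ 2 (g j))
    (hH1 : hypH1 θ h g) (hH2 : hypH2 h g)
    (R1 : (Fin n → ℝ) → Matrix (Fin n) (Fin n) ℝ)
    (R2 : (Fin n → ℝ) → Matrix (Fin k) (Fin k) ℝ)
    (a b c : Fin k → (Fin n → ℝ) → ℝ) (p : Fin k → ℕ)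
    (hR1C : ∀ i j, ContDiff ℝ 1 fun x => R1 x i j)
    (hR1pd : ∀ x, (R1 x).PosDef)
    (hR2C : ∀ i j, ContDiff ℝ 1 fun x => R2 x i j)
    (hR2psd : ∀ x, (R2 x).PosSemidef)
    (haC : ∀ j, ContDiff ℝ 1 (a j)) (hbC : ∀ j, ContDiff ℝ 1 (b j))
    (hcC : ∀ j, ContDiff ℝ 1 (c j))
    (ha0 : ∀ j x, 0 ≤ a j x) (hb0 : ∀ j x, 0 ≤ b j x) (hc0 : ∀ j x, 0 ≤ c j x)
    (hbc : ∀ x ∈ feas h g, ∀ j, 0 < b j x + c j x)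
    (hpd : ∀ x ∈ feas h g, (R2 x).PosDef ∨ (Matrix.diagonal fun j => a j x).PosDef)
    (hp : ∀ j, 1 ≤ p j) :
    ∀ x ∈ feas h g, (matA h x).mulVec (vecF θ h g R1 R2 a b c p x) = 0 :=
  stmt_5_general θ h g hH2 R1 R2 a b c p

end
end

section
/- Theorem 2.3(d): Under assumptions (H1) and (H2), for every x ∈ S it holds that B(x)F(x) = diag(g(x))Q(x)⁻¹w(x) − R₃(x)(v(x))⁺, where w(x) := B(x)H(x)R₁(x)[H(x) − P(x)ᵀQ(x)P(x)](∇θ(x))ᵀ − [Q(x) + diag(g(x))](R₂(x)diag(g(x)) − diag(a(x)))v(x) − R₃(x)(v(x))⁺. -/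
open Matrix Set Filter

noncomputable section

/-! The identity is algebra once `Q` is invertible. Since `H` and `Q` are symmetric and
`P = Q⁻¹BH`, the definition of `Q` gives `BPᵀ = BHBᵀQ⁻¹ = I + diag(g)Q⁻¹`, and `BH = QP` gives
`B(H − PᵀQP) = −diag(g)P`; substituting both into `BF` yields the claim.

`Q` is positive definite on `S`: by (H2) the rows of `A` are independent, so `H` is the orthogonal
projection onto `ker A`, and `zᵀQz = |HBᵀz|² − Σ g_j z_j²` with `g ≤ 0`. If this vanishes, `z` is
supported on the active constraints and `Bᵀz ∈ range Aᵀ`, so (H2) forces `z = 0`. -/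

namespace Matrix

section NullProj

variable {R : Type*} [CommRing R] {m n : Type*} [Fintype m] [Fintype n] [DecidableEq m]
  [DecidableEq n]

/-- The orthogonal projection onto `ker A` when `A` has independent rows. -/
def nullProj (A : Matrix m n R) : Matrix n n R :=
  1 - Aᵀ * (A * Aᵀ)⁻¹ * A

theorem transpose_nullProj (A : Matrix m n R) : (nullProj A)ᵀ = nullProj A := by
  simp [nullProj, transpose_nonsing_inv, Matrix.mul_assoc]

theorem nullProj_mul_self {A : Matrix m n R} (hA : IsUnit (A * Aᵀ).det) :
    nullProj A * nullProj A = nullProj A := by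
  have hAA : A * (Aᵀ * ((A * Aᵀ)⁻¹ * A)) = A := by
    rw [← Matrix.mul_assoc, ← Matrix.mul_assoc, mul_nonsing_inv _ hA, Matrix.one_mul]
  simp only [nullProj, Matrix.sub_mul, Matrix.mul_sub, Matrix.one_mul, Matrix.mul_one,
    Matrix.mul_assoc, hAA]
  abel

theorem exists_vecMul_eq_of_nullProj_mulVec_eq_zero {A : Matrix m n R} {u : n → R}
    (hu : nullProj A *ᵥ u = 0) : ∃ y, y ᵥ* A = u := by
  refine ⟨((A * Aᵀ)⁻¹ * A) *ᵥ u, ?_⟩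
  rw [nullProj, sub_mulVec, one_mulVec, sub_eq_zero] at hu
  rw [← mulVec_transpose, mulVec_mulVec, ← Matrix.mul_assoc, ← hu]

end NullProj

theorem isUnit_det_mul_transpose {m n : Type*} [Fintype m] [Fintype n] [DecidableEq m]
    {A : Matrix m n ℝ} (hA : LinearIndependent ℝ A.row) : IsUnit (A * Aᵀ).det := by
  have h := (PosDef.mul_conjTranspose_self A (vecMul_injective_iff.mpr hA)).isUnit
  rw [conjTranspose_eq_transpose_of_trivial] at h
  exact (isUnit_iff_isUnit_det _).mp h

theorem dotProduct_mulVec_mul_mul_transpose {R : Type*} [CommRing R] {k n : Type*}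
    [Fintype k] [Fintype n] {B : Matrix k n R} {H : Matrix n n R} (hHt : Hᵀ = H)
    (hHH : H * H = H) (z : k → R) :
    z ⬝ᵥ (B * H * Bᵀ) *ᵥ z = (H *ᵥ (z ᵥ* B)) ⬝ᵥ (H *ᵥ (z ᵥ* B)) := by
  conv_lhs => rw [← hHH]
  nth_rw 1 [← hHt]
  simp only [dotProduct_mulVec, ← mulVec_transpose, transpose_mul, transpose_transpose,
    mulVec_mulVec, Matrix.mul_assoc]

theorem dotProduct_diagonal_mulVec {R : Type*} [CommSemiring R] {k : Type*} [Fintype k]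
    [DecidableEq k] (d z : k → R) : z ⬝ᵥ diagonal d *ᵥ z = ∑ j, d j * (z j * z j) := by
  simp only [dotProduct, mulVec_diagonal]
  exact Finset.sum_congr rfl fun j _ => by ring

theorem eq_zero_of_vecMul_eq_vecMul {R : Type*} [CommRing R] {m n k : Type*} [Fintype m]
    [Fintype k] {A : Matrix m n R} {B : Matrix k n R} {p : k → Prop} [DecidablePred p]
    (hli : LinearIndependent R (Sum.elim A.row fun j : {j // p j} => B j))
    {y : m → R} {z : k → R} (hz : ∀ j, ¬p j → z j = 0) (h : y ᵥ* A = z ᵥ* B) : z = 0 := by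
  have hsum : ∑ j : {j // p j}, z j • B j = z ᵥ* B := by
    have hout : ∑ j : {j // ¬p j}, z j • B j = 0 :=
      Finset.sum_eq_zero fun j _ => by rw [hz j j.2, zero_smul]
    rw [vecMul_eq_sum, ← Fintype.sum_subtype_add_sum_subtype p, hout, add_zero]
  have hcoef := Fintype.linearIndependent_iff.mp hli (Sum.elim y fun j => -z j) (by
    simp only [Fintype.sum_sum_type, Sum.elim_inl, Sum.elim_inr, neg_smul,
      Finset.sum_neg_distrib, hsum]
    rw [← h, vecMul_eq_sum]
    exact add_neg_cancel _)
  funext j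
  by_cases hj : p j
  · simpa using hcoef (Sum.inr ⟨j, hj⟩)
  · exact hz j hj

theorem posDef_mul_nullProj_mul_transpose_sub_diagonal {m n k : Type*} [Fintype m]
    [Fintype n] [Fintype k] [DecidableEq m] [DecidableEq n] [DecidableEq k]
    {A : Matrix m n ℝ} {B : Matrix k n ℝ} {d : k → ℝ} (hd : ∀ j, d j ≤ 0)
    (hli : LinearIndependent ℝ (Sum.elim A.row fun j : {j // d j = 0} => B j)) :
    (B * nullProj A * Bᵀ - diagonal d).PosDef := by
  have hA := isUnit_det_mul_transpose (hli.comp Sum.inl Sum.inl_injective)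
  refine PosDef.of_dotProduct_mulVec_pos ?_ fun z hz => ?_
  · simp [IsSymm, transpose_nullProj, Matrix.mul_assoc]
  set u := nullProj A *ᵥ (z ᵥ* B)
  have hquad : star z ⬝ᵥ (B * nullProj A * Bᵀ - diagonal d) *ᵥ z =
      u ⬝ᵥ u + -∑ j, d j * (z j * z j) := by
    rw [star_trivial, sub_mulVec, dotProduct_sub, dotProduct_diagonal_mulVec,
      dotProduct_mulVec_mul_mul_transpose (transpose_nullProj A) (nullProj_mul_self hA),
      sub_eq_add_neg]
  have hu : 0 ≤ u ⬝ᵥ u := by simpa using dotProduct_star_self_nonneg u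
  have hdiag : ∀ j ∈ Finset.univ, d j * (z j * z j) ≤ 0 := fun j _ =>
    mul_nonpos_of_nonpos_of_nonneg (hd j) (mul_self_nonneg _)
  have hdiag_nonneg : 0 ≤ -∑ j, d j * (z j * z j) := neg_nonneg.mpr (Finset.sum_nonpos hdiag)
  rw [hquad]
  refine (add_nonneg hu hdiag_nonneg).lt_of_ne fun h0 => hz ?_
  obtain ⟨hu0, hd0⟩ := (add_eq_zero_iff_of_nonneg hu hdiag_nonneg).mp h0.symm
  obtain ⟨y, hy⟩ := exists_vecMul_eq_of_nullProj_mulVec_eq_zero (dotProduct_self_eq_zero.mp hu0)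
  refine eq_zero_of_vecMul_eq_vecMul hli (fun j hj => ?_) hy
  have := (Finset.sum_eq_zero_iff_of_nonpos hdiag).mp (neg_eq_zero.mp hd0) j (Finset.mem_univ j)
  simpa [hj] using this

section InverseAlgebra

variable {R : Type*} [CommRing R] {n k : Type*} [Fintype n] [Fintype k] [DecidableEq k]
  {B : Matrix k n R} {H : Matrix n n R} {Q D : Matrix k k R} {P : Matrix k n R}

theorem mul_transpose_eq_one_add_mul_inv (hH : Hᵀ = H) (hQ : Qᵀ = Q) (hu : IsUnit Q.det)
    (hBHB : B * H * Bᵀ = Q + D) (hP : P = Q⁻¹ * B * H) : B * Pᵀ = 1 + D * Q⁻¹ := by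
  rw [hP, transpose_mul, transpose_mul, hH, transpose_nonsing_inv, hQ, ← Matrix.mul_assoc,
    ← Matrix.mul_assoc, hBHB, Matrix.add_mul, mul_nonsing_inv _ hu]

theorem mul_sub_transpose_mul_mul (hH : Hᵀ = H) (hQ : Qᵀ = Q) (hu : IsUnit Q.det)
    (hBHB : B * H * Bᵀ = Q + D) (hP : P = Q⁻¹ * B * H) :
    B * (H - Pᵀ * Q * P) = -(D * P) := by
  have hBH : B * H = Q * P := by
    rw [hP, Matrix.mul_assoc, ← Matrix.mul_assoc Q, mul_nonsing_inv _ hu,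
      Matrix.one_mul]
  have hQP : Q⁻¹ * (Q * P) = P := by
    rw [← Matrix.mul_assoc, nonsing_inv_mul _ hu, Matrix.one_mul]
  calc B * (H - Pᵀ * Q * P) = B * H - (B * Pᵀ) * (Q * P) := by
        simp only [Matrix.mul_sub, Matrix.mul_assoc]
    _ = -(D * P) := by
        rw [mul_transpose_eq_one_add_mul_inv hH hQ hu hBHB hP, hBH, Matrix.add_mul,
          Matrix.one_mul, Matrix.mul_assoc, hQP]
        abel

theorem mulVec_vectorField_eq (hH : Hᵀ = H) (hQ : Qᵀ = Q) (hu : IsUnit Q.det)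
    (hBHB : B * H * Bᵀ = Q + D) (hP : P = Q⁻¹ * B * H) (R₁ : Matrix n n R)
    (R₂ R₃ : Matrix k k R) (x : n → R) (v w : k → R) :
    B *ᵥ (-(((H - Pᵀ * Q * P) * R₁ * (H - Pᵀ * Q * P)) *ᵥ x) - (Pᵀ * D * R₂) *ᵥ v
        - (Pᵀ * R₃) *ᵥ w) =
      (D * Q⁻¹) *ᵥ ((B * H * R₁ * (H - Pᵀ * Q * P)) *ᵥ x - ((Q + D) * R₂) *ᵥ v - R₃ *ᵥ w)
        - R₃ *ᵥ w := by
  have hBP := mul_transpose_eq_one_add_mul_inv hH hQ hu hBHB hP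
  have hBM := mul_sub_transpose_mul_mul hH hQ hu hBHB hP
  have hDQQ : D * Q⁻¹ * Q = D := by rw [Matrix.mul_assoc, nonsing_inv_mul _ hu, Matrix.mul_one]
  have e₁ : B * ((H - Pᵀ * Q * P) * R₁ * (H - Pᵀ * Q * P)) =
      -(D * Q⁻¹ * (B * H * R₁ * (H - Pᵀ * Q * P))) := by
    rw [← Matrix.mul_assoc, ← Matrix.mul_assoc, hBM, hP]
    simp only [Matrix.neg_mul, Matrix.mul_assoc]
  have e₂ : B * (Pᵀ * D * R₂) = D * Q⁻¹ * ((Q + D) * R₂) := by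
    rw [← Matrix.mul_assoc, ← Matrix.mul_assoc, hBP, Matrix.add_mul, Matrix.add_mul,
      Matrix.add_mul, Matrix.mul_add, ← Matrix.mul_assoc (D * Q⁻¹) Q, hDQQ, Matrix.one_mul,
      Matrix.mul_assoc (D * Q⁻¹)]
  have e₃ : B * (Pᵀ * R₃) = R₃ + D * Q⁻¹ * R₃ := by
    rw [← Matrix.mul_assoc, hBP, Matrix.add_mul, Matrix.one_mul]
  simp only [mulVec_sub, mulVec_neg, mulVec_mulVec, e₁, e₂, e₃, neg_mulVec, add_mulVec]
  simp only [Matrix.mul_assoc]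
  abel

end InverseAlgebra

end Matrix

theorem stmt_6_general
    {n m k : ℕ}
    (θ : (Fin n → ℝ) → ℝ) (h : Fin m → (Fin n → ℝ) → ℝ) (g : Fin k → (Fin n → ℝ) → ℝ)
    (hH2 : hypH2 h g)
    (R1 : (Fin n → ℝ) → Matrix (Fin n) (Fin n) ℝ)
    (R2 : (Fin n → ℝ) → Matrix (Fin k) (Fin k) ℝ)
    (a b c : Fin k → (Fin n → ℝ) → ℝ) (p : Fin k → ℕ) :
    ∀ x ∈ feas h g,
      (matB g x).mulVec (vecF θ h g R1 R2 a b c p x) =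
        (Matrix.diagonal (fun j => g j x) * (matQ h g x)⁻¹).mulVec
          ((matB g x * matH h x * R1 x *
              (matH h x - (matP h g x)ᵀ * matQ h g x * matP h g x)).mulVec (grad θ x)
            - ((matQ h g x + Matrix.diagonal fun j => g j x) *
                (R2 x * Matrix.diagonal (fun j => g j x) -
                  Matrix.diagonal fun j => a j x)).mulVec (vecv θ h g x)
            - (matR3 b c p x (vecv θ h g x)).mulVec (pPart (vecv θ h g x)))
        - (matR3 b c p x (vecv θ h g x)).mulVec (pPart (vecv θ h g x)) := by
  intro x hx
  have hQ : (matQ h g x).PosDef :=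
    posDef_mul_nullProj_mul_transpose_sub_diagonal hx.2 (hH2 x hx)
  exact mulVec_vectorField_eq (transpose_nullProj _) (isHermitian_iff_isSymm.mp hQ.isHermitian)
    ((isUnit_iff_isUnit_det _).mp hQ.isUnit) (sub_add_cancel _ _).symm rfl _ _ _ _ _ _

/-- Theorem 2.3(d): `B(x)F(x) = diag(g(x))·Q(x)⁻¹·w(x) − R₃(x)(v(x))⁺` for every `x ∈ S`,
where `w(x)` is as stated in the paper. -/
theorem stmt_6
    {n m k : ℕ} (hmn : m < n)
    (θ : (Fin n → ℝ) → ℝ) (h : Fin m → (Fin n → ℝ) → ℝ) (g : Fin k → (Fin n → ℝ) → ℝ)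
    (hθ : ContDiff ℝ 2 θ) (hhC : ∀ i, ContDiff ℝ 2 (h i)) (hgC : ∀ j, ContDiff ℝ 2 (g j))
    (hH1 : hypH1 θ h g) (hH2 : hypH2 h g)
    (R1 : (Fin n → ℝ) → Matrix (Fin n) (Fin n) ℝ)
    (R2 : (Fin n → ℝ) → Matrix (Fin k) (Fin k) ℝ)
    (a b c : Fin k → (Fin n → ℝ) → ℝ) (p : Fin k → ℕ)
    (hR1C : ∀ i j, ContDiff ℝ 1 fun x => R1 x i j)
    (hR1pd : ∀ x, (R1 x).PosDef)
    (hR2C : ∀ i j, ContDiff ℝ 1 fun x => R2 x i j)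
    (hR2psd : ∀ x, (R2 x).PosSemidef)
    (haC : ∀ j, ContDiff ℝ 1 (a j)) (hbC : ∀ j, ContDiff ℝ 1 (b j))
    (hcC : ∀ j, ContDiff ℝ 1 (c j))
    (ha0 : ∀ j x, 0 ≤ a j x) (hb0 : ∀ j x, 0 ≤ b j x) (hc0 : ∀ j x, 0 ≤ c j x)
    (hbc : ∀ x ∈ feas h g, ∀ j, 0 < b j x + c j x)
    (hpd : ∀ x ∈ feas h g, (R2 x).PosDef ∨ (Matrix.diagonal fun j => a j x).PosDef)
    (hp : ∀ j, 1 ≤ p j) :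
    ∀ x ∈ feas h g,
      (matB g x).mulVec (vecF θ h g R1 R2 a b c p x) =
        (Matrix.diagonal (fun j => g j x) * (matQ h g x)⁻¹).mulVec
          ((matB g x * matH h x * R1 x *
              (matH h x - (matP h g x)ᵀ * matQ h g x * matP h g x)).mulVec (grad θ x)
            - ((matQ h g x + Matrix.diagonal fun j => g j x) *
                (R2 x * Matrix.diagonal (fun j => g j x) -
                  Matrix.diagonal fun j => a j x)).mulVec (vecv θ h g x)
            - (matR3 b c p x (vecv θ h g x)).mulVec (pPart (vecv θ h g x)))
        - (matR3 b c p x (vecv θ h g x)).mulVec (pPart (vecv θ h g x)) :=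
  stmt_6_general θ h g hH2 R1 R2 a b c p

end
end

section
/- Lyapunov decrease identity (2.7): Under assumptions (H1) and (H2), for every x ∈ S it holds that ∇θ(x)F(x) = −ξ(x)R₁(x)(ξ(x))ᵀ − (diag(g(x))v(x))ᵀR₂(x)diag(g(x))v(x) − Σ_{j=1}^k a_j(x)|g_j(x)|v_j(x)² − Σ_{j=1}^k b_j(x)(max(0, v_j(x)))² − Σ_{j=1}^k c_j(x)(max(0, v_j(x)))^{2p_j+2}, where ξ(x) := ∇θ(x)[H(x) − H(x)B(x)ᵀQ(x)⁻¹B(x)H(x)]; in particular ∇θ(x)F(x) ≤ 0 for all x ∈ S. -/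
open Matrix Set Filter

noncomputable section

/-!
Each of the three terms of `F` pairs with `∇θ(x)` into a quadratic form. Since `H` and `Q` are
symmetric, `PᵀQP = HBᵀQ⁻¹BH` by `Q⁻¹QQ⁻¹ = Q⁻¹` (true for `Matrix.inv` even when `Q` is
singular), so the first term is the `R₁`-form of `ξ`. Moving `Pᵀ` across the dot product turns
`∇θ(x)` into `v` in the other two terms, which give the `R₂`-form of `diag(g)v`, the sum
`∑ gⱼaⱼvⱼ²`, and `∑ (bⱼ + cⱼ(vⱼ⁺)^{2pⱼ}) vⱼvⱼ⁺` with `vⱼvⱼ⁺ = (vⱼ⁺)²`. On `S` we have `g ≤ 0`, so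
every term has a sign.
-/

namespace Matrix

variable {ι κ R : Type*} [Fintype ι]

lemma IsSymm.mul_mul_transpose [CommSemiring R] {M : Matrix ι ι R} (hM : M.IsSymm)
    (A : Matrix κ ι R) : (A * M * Aᵀ).IsSymm := by
  rw [IsSymm, transpose_mul, transpose_mul, transpose_transpose, hM.eq, Matrix.mul_assoc]

lemma nonsing_inv_mul_self_mul_nonsing_inv [DecidableEq ι] [CommRing R] (A : Matrix ι ι R) :
    A⁻¹ * A * A⁻¹ = A⁻¹ := by
  by_cases hA : IsUnit A.det
  · rw [nonsing_inv_mul _ hA, Matrix.one_mul]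
  · rw [nonsing_inv_apply_not_isUnit _ hA, Matrix.zero_mul, Matrix.zero_mul]

lemma dotProduct_mul_mul_mulVec_of_isSymm [CommSemiring R] {M : Matrix ι ι R} (hM : M.IsSymm)
    (S : Matrix ι ι R) (u : ι → R) :
    u ⬝ᵥ (M * S * M) *ᵥ u = (u ᵥ* M) ⬝ᵥ S *ᵥ (u ᵥ* M) := by
  have hMu : M *ᵥ u = u ᵥ* M := by rw [← mulVec_transpose, hM.eq]
  rw [← mulVec_mulVec, ← mulVec_mulVec, dotProduct_mulVec, hMu]

lemma dotProduct_transpose_mul_mulVec [CommSemiring R] [Fintype κ] (P : Matrix κ ι R)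
    (X : Matrix κ κ R) (u : ι → R) (w : κ → R) :
    u ⬝ᵥ (Pᵀ * X) *ᵥ w = (P *ᵥ u) ⬝ᵥ X *ᵥ w := by
  rw [← mulVec_mulVec, dotProduct_mulVec, vecMul_transpose]

lemma dotProduct_diagonal_mul_diagonal_mulVec [DecidableEq ι] [CommSemiring R]
    (d e u : ι → R) : u ⬝ᵥ (diagonal d * diagonal e) *ᵥ u = ∑ i, d i * e i * u i ^ 2 := by
  simp only [diagonal_mul_diagonal, mulVec_diagonal, dotProduct]
  exact Finset.sum_congr rfl fun i _ => by ring

lemma mul_max_zero_self [MonoidWithZero R] [LinearOrder R] (t : R) :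
    t * max 0 t = max 0 t ^ 2 := by
  rcases le_total t 0 with ht | ht
  · rw [max_eq_left ht, mul_zero, sq, mul_zero]
  · rw [max_eq_right ht, sq]

lemma dotProduct_diagonal_mulVec_max_zero [DecidableEq ι] [CommRing R] [LinearOrder R]
    (β γ w : ι → R) (q : ι → ℕ) :
    w ⬝ᵥ diagonal (fun i => β i + γ i * max 0 (w i) ^ q i) *ᵥ (fun i => max 0 (w i)) =
      ∑ i, β i * max 0 (w i) ^ 2 + ∑ i, γ i * max 0 (w i) ^ (q i + 2) := by
  simp only [mulVec_diagonal, dotProduct, ← Finset.sum_add_distrib]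
  refine Finset.sum_congr rfl fun i _ => ?_
  rw [mul_left_comm, mul_max_zero_self]
  ring

end Matrix

section Projections

variable {n m k : ℕ} (h : Fin m → (Fin n → ℝ) → ℝ) (g : Fin k → (Fin n → ℝ) → ℝ)
  (x : Fin n → ℝ)

lemma matH_isSymm : (matH h x).IsSymm := by
  have hAAt : (matA h x * (matA h x)ᵀ).IsSymm := by
    rw [IsSymm, transpose_mul, transpose_transpose]
  rw [matH]
  simpa using isSymm_one.sub (hAAt.inv.mul_mul_transpose (matA h x)ᵀ)

lemma matQ_isSymm : (matQ h g x).IsSymm :=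
  ((matH_isSymm h x).mul_mul_transpose (matB g x)).sub (isSymm_diagonal _)

lemma transpose_matP : (matP h g x)ᵀ = matH h x * (matB g x)ᵀ * (matQ h g x)⁻¹ := by
  rw [matP, transpose_mul, transpose_mul, (matH_isSymm h x).eq, transpose_nonsing_inv,
    (matQ_isSymm h g x).eq, Matrix.mul_assoc]

lemma transpose_matP_mul_matQ_mul_matP :
    (matP h g x)ᵀ * matQ h g x * matP h g x =
      matH h x * (matB g x)ᵀ * (matQ h g x)⁻¹ * matB g x * matH h x := by
  rw [transpose_matP, matP]
  simp only [Matrix.mul_assoc]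
  rw [← Matrix.mul_assoc (matQ h g x)⁻¹, ← Matrix.mul_assoc _ (matQ h g x)⁻¹,
    nonsing_inv_mul_self_mul_nonsing_inv]

lemma isSymm_matH_sub :
    (matH h x - matH h x * (matB g x)ᵀ * (matQ h g x)⁻¹ * matB g x * matH h x).IsSymm := by
  have hH := matH_isSymm h x
  have hHB : matH h x * (matB g x)ᵀ * (matQ h g x)⁻¹ * matB g x * matH h x =
      matH h x * (matB g x)ᵀ * (matQ h g x)⁻¹ * (matH h x * (matB g x)ᵀ)ᵀ := by
    rw [transpose_mul, transpose_transpose, hH.eq, Matrix.mul_assoc _ (matB g x)]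
  rw [hHB]
  exact hH.sub ((matQ_isSymm h g x).inv.mul_mul_transpose _)

lemma grad_dotProduct_vecF (θ : (Fin n → ℝ) → ℝ)
    (R1 : (Fin n → ℝ) → Matrix (Fin n) (Fin n) ℝ) (R2 : (Fin n → ℝ) → Matrix (Fin k) (Fin k) ℝ)
    (a b c : Fin k → (Fin n → ℝ) → ℝ) (p : Fin k → ℕ) (hg : ∀ j, g j x ≤ 0) :
    grad θ x ⬝ᵥ vecF θ h g R1 R2 a b c p x =
      -(grad θ x ᵥ* (matH h x - matH h x * (matB g x)ᵀ * (matQ h g x)⁻¹ * matB g x * matH h x) ⬝ᵥ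
          R1 x *ᵥ grad θ x ᵥ*
            (matH h x - matH h x * (matB g x)ᵀ * (matQ h g x)⁻¹ * matB g x * matH h x))
      - diagonal (fun j => g j x) *ᵥ vecv θ h g x ⬝ᵥ
          R2 x *ᵥ diagonal (fun j => g j x) *ᵥ vecv θ h g x
      - ∑ j, a j x * |g j x| * vecv θ h g x j ^ 2
      - ∑ j, b j x * max 0 (vecv θ h g x j) ^ 2
      - ∑ j, c j x * max 0 (vecv θ h g x j) ^ (2 * p j + 2) := by
  have hv : matP h g x *ᵥ grad θ x = vecv θ h g x := rfl
  have abs_term : ∑ j, a j x * |g j x| * vecv θ h g x j ^ 2 =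
      -∑ j, g j x * a j x * vecv θ h g x j ^ 2 := by
    rw [← Finset.sum_neg_distrib]
    exact Finset.sum_congr rfl fun j _ => by rw [abs_of_nonpos (hg j)]; ring
  have r1_term : grad θ x ⬝ᵥ ((matH h x - (matP h g x)ᵀ * matQ h g x * matP h g x) * R1 x *
      (matH h x - (matP h g x)ᵀ * matQ h g x * matP h g x)) *ᵥ grad θ x =
      grad θ x ᵥ* (matH h x - matH h x * (matB g x)ᵀ * (matQ h g x)⁻¹ * matB g x * matH h x) ⬝ᵥ
        R1 x *ᵥ grad θ x ᵥ*
          (matH h x - matH h x * (matB g x)ᵀ * (matQ h g x)⁻¹ * matB g x * matH h x) := by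
    rw [transpose_matP_mul_matQ_mul_matP,
      dotProduct_mul_mul_mulVec_of_isSymm (isSymm_matH_sub h g x)]
  have r2_term : grad θ x ⬝ᵥ ((matP h g x)ᵀ * diagonal (fun j => g j x) *
      (R2 x * diagonal (fun j => g j x) - diagonal (fun j => a j x))) *ᵥ vecv θ h g x =
      diagonal (fun j => g j x) *ᵥ vecv θ h g x ⬝ᵥ
          R2 x *ᵥ diagonal (fun j => g j x) *ᵥ vecv θ h g x -
        ∑ j, g j x * a j x * vecv θ h g x j ^ 2 := by
    rw [Matrix.mul_assoc, dotProduct_transpose_mul_mulVec, hv, Matrix.mul_sub, ← Matrix.mul_assoc,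
      sub_mulVec, dotProduct_sub, dotProduct_mul_mul_mulVec_of_isSymm (isSymm_diagonal _),
      ← mulVec_transpose, diagonal_transpose, dotProduct_diagonal_mul_diagonal_mulVec]
  have r3_term : grad θ x ⬝ᵥ ((matP h g x)ᵀ * matR3 b c p x (vecv θ h g x)) *ᵥ
      pPart (vecv θ h g x) =
      ∑ j, b j x * max 0 (vecv θ h g x j) ^ 2 +
        ∑ j, c j x * max 0 (vecv θ h g x j) ^ (2 * p j + 2) := by
    rw [dotProduct_transpose_mul_mulVec, hv, matR3]
    exact dotProduct_diagonal_mulVec_max_zero _ _ _ _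
  rw [vecF, dotProduct_sub, dotProduct_sub, dotProduct_neg, r1_term, r2_term, r3_term, abs_term]
  ring

end Projections

theorem stmt_7_general
    {n m k : ℕ}
    (θ : (Fin n → ℝ) → ℝ) (h : Fin m → (Fin n → ℝ) → ℝ) (g : Fin k → (Fin n → ℝ) → ℝ)
    (R1 : (Fin n → ℝ) → Matrix (Fin n) (Fin n) ℝ)
    (R2 : (Fin n → ℝ) → Matrix (Fin k) (Fin k) ℝ)
    (a b c : Fin k → (Fin n → ℝ) → ℝ) (p : Fin k → ℕ)
    (hR1pd : ∀ x, (R1 x).PosDef)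
    (hR2psd : ∀ x, (R2 x).PosSemidef)
    (ha0 : ∀ j x, 0 ≤ a j x) (hb0 : ∀ j x, 0 ≤ b j x) (hc0 : ∀ j x, 0 ≤ c j x) :
    ∀ x ∈ feas h g,
      (grad θ x ⬝ᵥ vecF θ h g R1 R2 a b c p x =
        -(Matrix.vecMul (grad θ x)
            (matH h x - matH h x * (matB g x)ᵀ * (matQ h g x)⁻¹ * matB g x * matH h x) ⬝ᵥ
          (R1 x).mulVec (Matrix.vecMul (grad θ x)
            (matH h x - matH h x * (matB g x)ᵀ * (matQ h g x)⁻¹ * matB g x * matH h x)))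
        - ((Matrix.diagonal fun j => g j x).mulVec (vecv θ h g x) ⬝ᵥ
            (R2 x).mulVec ((Matrix.diagonal fun j => g j x).mulVec (vecv θ h g x)))
        - (∑ j, a j x * |g j x| * (vecv θ h g x j) ^ 2)
        - (∑ j, b j x * (max 0 (vecv θ h g x j)) ^ 2)
        - (∑ j, c j x * (max 0 (vecv θ h g x j)) ^ (2 * p j + 2))) ∧
      grad θ x ⬝ᵥ vecF θ h g R1 R2 a b c p x ≤ 0 := by
  intro x hx
  have identity := grad_dotProduct_vecF h g x θ R1 R2 a b c p hx.2
  refine ⟨identity, identity ▸ ?_⟩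
  have r1_nonneg := (hR1pd x).posSemidef.dotProduct_mulVec_nonneg
    (grad θ x ᵥ* (matH h x - matH h x * (matB g x)ᵀ * (matQ h g x)⁻¹ * matB g x * matH h x))
  have r2_nonneg :=
    (hR2psd x).dotProduct_mulVec_nonneg (diagonal (fun j => g j x) *ᵥ vecv θ h g x)
  have a_nonneg : 0 ≤ ∑ j, a j x * |g j x| * vecv θ h g x j ^ 2 :=
    Finset.sum_nonneg fun j _ => by have := ha0 j x; positivity
  have b_nonneg : 0 ≤ ∑ j, b j x * max 0 (vecv θ h g x j) ^ 2 :=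
    Finset.sum_nonneg fun j _ => by have := hb0 j x; positivity
  have c_nonneg : 0 ≤ ∑ j, c j x * max 0 (vecv θ h g x j) ^ (2 * p j + 2) :=
    Finset.sum_nonneg fun j _ => by have := hc0 j x; positivity
  simp only [star_trivial] at r1_nonneg r2_nonneg
  linarith

/-- Identity (2.7): the Lyapunov decrease identity for `∇θ(x)F(x)` on `S`;
in particular `∇θ(x)F(x) ≤ 0` for all `x ∈ S`. -/
theorem stmt_7
    {n m k : ℕ} (hmn : m < n)
    (θ : (Fin n → ℝ) → ℝ) (h : Fin m → (Fin n → ℝ) → ℝ) (g : Fin k → (Fin n → ℝ) → ℝ)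
    (hθ : ContDiff ℝ 2 θ) (hhC : ∀ i, ContDiff ℝ 2 (h i)) (hgC : ∀ j, ContDiff ℝ 2 (g j))
    (hH1 : hypH1 θ h g) (hH2 : hypH2 h g)
    (R1 : (Fin n → ℝ) → Matrix (Fin n) (Fin n) ℝ)
    (R2 : (Fin n → ℝ) → Matrix (Fin k) (Fin k) ℝ)
    (a b c : Fin k → (Fin n → ℝ) → ℝ) (p : Fin k → ℕ)
    (hR1C : ∀ i j, ContDiff ℝ 1 fun x => R1 x i j)
    (hR1pd : ∀ x, (R1 x).PosDef)
    (hR2C : ∀ i j, ContDiff ℝ 1 fun x => R2 x i j)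
    (hR2psd : ∀ x, (R2 x).PosSemidef)
    (haC : ∀ j, ContDiff ℝ 1 (a j)) (hbC : ∀ j, ContDiff ℝ 1 (b j))
    (hcC : ∀ j, ContDiff ℝ 1 (c j))
    (ha0 : ∀ j x, 0 ≤ a j x) (hb0 : ∀ j x, 0 ≤ b j x) (hc0 : ∀ j x, 0 ≤ c j x)
    (hbc : ∀ x ∈ feas h g, ∀ j, 0 < b j x + c j x)
    (hpd : ∀ x ∈ feas h g, (R2 x).PosDef ∨ (Matrix.diagonal fun j => a j x).PosDef)
    (hp : ∀ j, 1 ≤ p j) :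
    ∀ x ∈ feas h g,
      (grad θ x ⬝ᵥ vecF θ h g R1 R2 a b c p x =
        -(Matrix.vecMul (grad θ x)
            (matH h x - matH h x * (matB g x)ᵀ * (matQ h g x)⁻¹ * matB g x * matH h x) ⬝ᵥ
          (R1 x).mulVec (Matrix.vecMul (grad θ x)
            (matH h x - matH h x * (matB g x)ᵀ * (matQ h g x)⁻¹ * matB g x * matH h x)))
        - ((Matrix.diagonal fun j => g j x).mulVec (vecv θ h g x) ⬝ᵥ
            (R2 x).mulVec ((Matrix.diagonal fun j => g j x).mulVec (vecv θ h g x)))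
        - (∑ j, a j x * |g j x| * (vecv θ h g x j) ^ 2)
        - (∑ j, b j x * (max 0 (vecv θ h g x j)) ^ 2)
        - (∑ j, c j x * (max 0 (vecv θ h g x j)) ^ (2 * p j + 2))) ∧
      grad θ x ⬝ᵥ vecF θ h g R1 R2 a b c p x ≤ 0 :=
  stmt_7_general θ h g R1 R2 a b c p hR1pd hR2psd ha0 hb0 hc0

end
end
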